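/- arXiv:2211.06072 — 2 statements merged into one kernel-verified Lean document; each statement's English description precedes it below -/
import Mathlib

section
/- A set K ⊆ {0,1,2,3}^k is such that every two distinct elements differ by exactly 2 in some coordinate and |K| = 2^k if and only if the map sending each v ∈ K to the pair (F(v), O(v)), where F(v)_i = ⌊v_i/2⌋ and O(v)_i = v_i mod 2, defines via F a bijection onto {0,1}^k and the induced orientation (assigning O(v) to vertex F(v)) is a unique sink orientation of the k-cube. -/
/-- The Szabó–Welzl condition: `O` is a unique sink orientation of the `k`-cube. -/
def IsUSO {k : ℕ} (O : (Fin k → Bool) → (Fin k → Bool)) : Prop :=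
  ∀ v w : Fin k → Bool, v ≠ w → ∃ i : Fin k, v i ≠ w i ∧ O v i = O w i

/-- `F(v)_i = ⌊v_i / 2⌋` (as a Boolean). -/
def Fmap {k : ℕ} (v : Fin k → Fin 4) : Fin k → Bool :=
  fun i => decide (2 ≤ (v i : ℕ))

/-- `O(v)_i = v_i mod 2` (as a Boolean). -/
def Omap {k : ℕ} (v : Fin k → Fin 4) : Fin k → Bool :=
  fun i => decide ((v i : ℕ) % 2 = 1)

lemma coord_iff : ∀ (a b : Fin 4),
    ((a : ℕ) = (b : ℕ) + 2 ∨ (b : ℕ) = (a : ℕ) + 2) ↔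
      (decide (2 ≤ (a : ℕ)) ≠ decide (2 ≤ (b : ℕ)) ∧
        decide ((a : ℕ) % 2 = 1) = decide ((b : ℕ) % 2 = 1)) := by decide

lemma card_cube (k : ℕ) : Fintype.card (Fin k → Bool) = 2 ^ k := by
  simp [Fintype.card_fun]

theorem stmt1 (k : ℕ) (K : Finset (Fin k → Fin 4)) :
    (K.card = 2 ^ k ∧ ∀ v ∈ K, ∀ w ∈ K, v ≠ w →
        ∃ i : Fin k, (v i : ℕ) = (w i : ℕ) + 2 ∨ (w i : ℕ) = (v i : ℕ) + 2) ↔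
      (Set.BijOn Fmap (K : Set (Fin k → Fin 4)) Set.univ ∧
        ∃ O : (Fin k → Bool) → (Fin k → Bool),
          IsUSO O ∧ ∀ v ∈ K, O (Fmap v) = Omap v) := by
  classical
  constructor
  · rintro ⟨hcard, hdiff⟩
    have hinj : Set.InjOn Fmap (K : Set (Fin k → Fin 4)) := by
      intro v hv w hw hF
      by_contra hne
      obtain ⟨i, hi⟩ := hdiff v hv w hw hne
      exact ((coord_iff (v i) (w i)).mp hi).1 (by simpa [Fmap] using congrFun hF i)
    have himg : K.image Fmap = Finset.univ := by
      apply Finset.eq_univ_of_card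
      rw [Finset.card_image_of_injOn hinj, hcard, card_cube]
    have hsurj : Set.SurjOn Fmap (K : Set (Fin k → Fin 4)) Set.univ := by
      intro x _
      have : x ∈ (K.image Fmap : Finset _) := himg ▸ Finset.mem_univ x
      simpa using this
    have hbij : Set.BijOn Fmap (K : Set (Fin k → Fin 4)) Set.univ :=
      ⟨fun _ _ => Set.mem_univ _, hinj, hsurj⟩
    refine ⟨hbij, fun x => Omap (Function.invFunOn Fmap (K : Set _) x), ?_, ?_⟩
    · intro x y hxy
      have hx : x ∈ Fmap '' (K : Set _) := hsurj (Set.mem_univ x)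
      have hy : y ∈ Fmap '' (K : Set _) := hsurj (Set.mem_univ y)
      set v := Function.invFunOn Fmap (K : Set _) x with hv
      set w := Function.invFunOn Fmap (K : Set _) y with hw
      have hvK : v ∈ (K : Set _) := Function.invFunOn_mem hx
      have hwK : w ∈ (K : Set _) := Function.invFunOn_mem hy
      have hvx : Fmap v = x := Function.invFunOn_eq hx
      have hwy : Fmap w = y := Function.invFunOn_eq hy
      have hvw : v ≠ w := fun h => hxy (by rw [← hvx, ← hwy, h])
      obtain ⟨i, hi⟩ := hdiff v hvK w hwK hvw
      have h2 := (coord_iff (v i) (w i)).mp hi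
      refine ⟨i, ?_, ?_⟩
      · rw [← hvx, ← hwy]; exact h2.1
      · exact h2.2
    · intro v hv
      have : Function.invFunOn Fmap (K : Set _) (Fmap v) = v :=
        hinj.leftInvOn_invFunOn hv
      show Omap (Function.invFunOn Fmap (K : Set _) (Fmap v)) = Omap v
      rw [this]
  · rintro ⟨hbij, O, hUSO, hO⟩
    have hinj := hbij.injOn
    have himg : K.image Fmap = Finset.univ := by
      apply Finset.eq_univ_iff_forall.mpr
      intro x
      obtain ⟨v, hv, hvx⟩ := hbij.surjOn (Set.mem_univ x)
      exact Finset.mem_image.mpr ⟨v, hv, hvx⟩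
    constructor
    · have := congrArg Finset.card himg
      rwa [Finset.card_image_of_injOn hinj, Finset.card_univ, card_cube] at this
    · intro v hv w hw hvw
      have hF : Fmap v ≠ Fmap w := fun h => hvw (hinj hv hw h)
      obtain ⟨i, hi1, hi2⟩ := hUSO (Fmap v) (Fmap w) hF
      rw [hO v hv, hO w hw] at hi2
      exact ⟨i, (coord_iff (v i) (w i)).mpr ⟨hi1, hi2⟩⟩
end

section
/- Let (S^(0)_1,…,S^(0)_i, S^(1)_1,…,S^(1)_i, S^(2)_1,…,S^(2)_i, S^(3)_1,…,S^(3)_i) be a generalized rewriting rule. Let K ⊆ {0,1,2,3}^k represent a k-dimensional USO with labelling L : K → [i], and h ∈ [k]. Then T_h(K, L) := ⋃_{v∈K} { v_1…v_{h-1} t_1…t_d v_{h+1}…v_k : t ∈ S^(v_h)_{L(v)} } represents a (k+d-1)-dimensional USO. -/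
/-- Strings `v` and `w` differ by exactly 2 in coordinate `i`. -/
def Diff2At (v w : List (Fin 4)) (i : ℕ) : Prop :=
  (v.getD i 0 : ℕ) = (w.getD i 0 : ℕ) + 2 ∨ (w.getD i 0 : ℕ) = (v.getD i 0 : ℕ) + 2

/-- A set of strings in `{0,1,2,3}^n` represents an `n`-dimensional USO
(a `4ℤ^n`-periodic cube tiling): all strings have length `n`, there are `2^n`
of them, and any two distinct ones differ by exactly 2 in some coordinate. -/
def IsUSOSet (n : ℕ) (K : Finset (List (Fin 4))) : Prop :=
  (∀ v ∈ K, v.length = n) ∧ K.card = 2 ^ n ∧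
    ∀ v ∈ K, ∀ w ∈ K, v ≠ w → ∃ i : ℕ, i < n ∧ Diff2At v w i

/-- Replace the entry of `v` at (0-indexed) position `h` by the string `s`. -/
def splice (v : List (Fin 4)) (h : ℕ) (s : List (Fin 4)) : List (Fin 4) :=
  v.take h ++ s ++ v.drop (h + 1)

/-- A simple rewriting rule `(S⁽⁰⁾, S⁽¹⁾, S⁽²⁾, S⁽³⁾)` with target dimension `d`. -/
def IsSimpleRule (d : ℕ) (S : Fin 4 → Finset (List (Fin 4))) : Prop :=
  Disjoint (S 0) (S 2) ∧ IsUSOSet d (S 0 ∪ S 2) ∧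
    Disjoint (S 1) (S 3) ∧ IsUSOSet d (S 1 ∪ S 3)

/-- Applying a simple rewriting rule at (0-indexed) dimension `h`:
`S_h(K) = ⋃_{v ∈ K} { v₁…v_{h-1} s v_{h+1}…v_k : s ∈ S^(v_h) }`. -/
def rewriteSet (S : Fin 4 → Finset (List (Fin 4))) (h : ℕ)
    (K : Finset (List (Fin 4))) : Finset (List (Fin 4)) :=
  K.biUnion fun v => (S (v.getD h 0)).image (splice v h)

/-- A generalized rewriting rule with labels in `Fin i` and target dimension `d`. -/
def IsGenRule (d i : ℕ) (S : Fin 4 → Fin i → Finset (List (Fin 4))) : Prop :=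
  (∀ j j' : Fin i, Disjoint (S 0 j) (S 2 j') ∧ IsUSOSet d (S 0 j ∪ S 2 j')) ∧
    (∀ j j' : Fin i, Disjoint (S 1 j) (S 3 j') ∧ IsUSOSet d (S 1 j ∪ S 3 j'))

/-- Applying a generalized rewriting rule at (0-indexed) dimension `h` to the
labelled USO `(K, L)`:
`T_h(K, L) = ⋃_{v ∈ K} { v₁…v_{h-1} t v_{h+1}…v_k : t ∈ S^(v_h)_{L(v)} }`. -/
def genRewrite {i : ℕ} (S : Fin 4 → Fin i → Finset (List (Fin 4)))
    (L : List (Fin 4) → Fin i) (h : ℕ) (K : Finset (List (Fin 4))) :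
    Finset (List (Fin 4)) :=
  K.biUnion fun v => (S (v.getD h 0) (L v)).image (splice v h)


/-! A USO `K ⊆ {0,1,2,3}^k` is a `4ℤ^k`-periodic tiling by the unit cubes `v + [0,1]^k`:
since distinct corners differ by 2 somewhere, `(v, ε) ↦ v + ε` (`ε ∈ {0,1}^k`) is injective on
`K × {0,1}^k`, hence a bijection onto `(ℤ/4)^k`. Counting the points with `h`-th coordinate
`t + 1` gives `n_t + n_{t+1} = 2^(k-1)` for the layers `n_t = #{v ∈ K | v_h = t}`, so `n_0 = n_2`
and `n_1 = n_3`. As `|S^(c)_j| + |S^(c+2)_j'| = 2^d` for all labels, `a_c = |S^(c)_j|` does not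
depend on `j`, and `∑ n_c a_c = (n_0 + n_1) 2^d = 2^(k+d-1)`.

Distinct pairs `(v, s) ≠ (w, t)` give strings differing by 2 somewhere, which yields both
injectivity of the construction and the USO condition: if `v = w`, then `s ≠ t` lie in a USO;
otherwise `v, w` differ by 2 at some `p`, which survives the splice if `p ≠ h`, and if `p = h`
then `s ≠ t` lie in the disjoint union `S^(c)_j ∪ S^(c+2)_j'`, again a USO. -/

open Finset

lemma diff2_iff_eq_add_two (a b : Fin 4) : ((a : ℕ) = b + 2 ∨ (b : ℕ) = a + 2) ↔ b = a + 2 := by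
  revert a b; decide

lemma add_castLE_ne_add_two_add_castLE (a : Fin 4) (e e' : Fin 2) :
    a + e.castLE (by norm_num) ≠ a + 2 + e'.castLE (by norm_num) := by
  revert a e e'; decide

lemma add_castLE_eq_add_one_iff (a t : Fin 4) (e : Fin 2) :
    a + e.castLE (by norm_num) = t + 1 ↔ (a = t + 1 ∧ e = 0) ∨ (a = t ∧ e = 1) := by
  revert a t e; decide

lemma diff2At_iff {v w : List (Fin 4)} {p : ℕ} : Diff2At v w p ↔ w.getD p 0 = v.getD p 0 + 2 :=
  diff2_iff_eq_add_two _ _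

lemma Diff2At.ne {v w : List (Fin 4)} {p : ℕ} (hd : Diff2At v w p) : v ≠ w := by
  rintro rfl; unfold Diff2At at hd; omega

section Splice

variable {v s : List (Fin 4)} {h : ℕ}

lemma length_splice (hh : h < v.length) : (splice v h s).length = v.length + s.length - 1 := by
  simp [splice]; omega

lemma getD_splice_of_lt {p : ℕ} (hp : p < h) (hh : h ≤ v.length) :
    (splice v h s).getD p 0 = v.getD p 0 := by
  simp only [splice, List.getD_eq_getElem?_getD]
  rw [List.getElem?_append_left (by simp; omega), List.getElem?_append_left (by simp; omega),
    List.getElem?_take_of_lt hp]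

lemma getD_splice_add {q : ℕ} (hh : h ≤ v.length) (hq : q < s.length) :
    (splice v h s).getD (h + q) 0 = s.getD q 0 := by
  simp [splice, List.getD_eq_getElem?_getD, List.getElem?_append_left,
    List.getElem?_append_right, *]

lemma getD_splice_of_gt {p : ℕ} (hp : h < p) (hh : h ≤ v.length) :
    (splice v h s).getD (p + s.length - 1) 0 = v.getD p 0 := by
  simp only [splice, List.getD_eq_getElem?_getD]
  rw [List.getElem?_append_right (by simp; omega), List.getElem?_drop]
  congr 2; simp; omega

end Splice

section Diff2AtSplice

variable {v w s t : List (Fin 4)} {h : ℕ}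

lemma Diff2At.splice_of_lt {p : ℕ} (hd : Diff2At v w p) (hp : p < h) (hv : h ≤ v.length)
    (hw : h ≤ w.length) : Diff2At (splice v h s) (splice w h t) p := by
  unfold Diff2At; rwa [getD_splice_of_lt hp hv, getD_splice_of_lt hp hw]

lemma Diff2At.splice_add {q : ℕ} (hd : Diff2At s t q) (hs : q < s.length) (ht : q < t.length)
    (hv : h ≤ v.length) (hw : h ≤ w.length) :
    Diff2At (splice v h s) (splice w h t) (h + q) := by
  unfold Diff2At; rwa [getD_splice_add hv hs, getD_splice_add hw ht]

lemma Diff2At.splice_of_gt {p : ℕ} (hd : Diff2At v w p) (hp : h < p) (hv : h ≤ v.length)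
    (hw : h ≤ w.length) (hst : s.length = t.length) :
    Diff2At (splice v h s) (splice w h t) (p + s.length - 1) := by
  unfold Diff2At; rwa [getD_splice_of_gt hp hv, hst, getD_splice_of_gt hp hw]

end Diff2AtSplice

section IsGenRule

variable {d i : ℕ} {S : Fin 4 → Fin i → Finset (List (Fin 4))}

lemma IsGenRule.add_two (hS : IsGenRule d i S) (c : Fin 4) (j j' : Fin i) :
    Disjoint (S c j) (S (c + 2) j') ∧ IsUSOSet d (S c j ∪ S (c + 2) j') := by
  fin_cases c
  · exact hS.1 j j'
  · exact hS.2 j j'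
  · obtain ⟨hdisj, hU⟩ := hS.1 j' j
    exact ⟨hdisj.symm, union_comm (S 0 j') _ ▸ hU⟩
  · obtain ⟨hdisj, hU⟩ := hS.2 j' j
    exact ⟨hdisj.symm, union_comm (S 1 j') _ ▸ hU⟩

lemma IsGenRule.length_eq (hS : IsGenRule d i S) {c : Fin 4} {j : Fin i} {s : List (Fin 4)}
    (hs : s ∈ S c j) : s.length = d :=
  (hS.add_two c j j).2.1 s (mem_union_left _ hs)

lemma IsGenRule.card_add_card (hS : IsGenRule d i S) (c : Fin 4) (j j' : Fin i) :
    #(S c j) + #(S (c + 2) j') = 2 ^ d := by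
  obtain ⟨hdisj, hU⟩ := hS.add_two c j j'
  rw [← card_union_of_disjoint hdisj, hU.2.1]

lemma IsGenRule.card_eq (hS : IsGenRule d i S) (c : Fin 4) (j j' : Fin i) :
    #(S c j) = #(S c j') := by
  have := hS.card_add_card c j j
  have := hS.card_add_card c j' j
  omega

end IsGenRule

lemma card_filter_eval_eq {k : ℕ} {α : Type*} [Fintype α] [DecidableEq α] (h : Fin k)
    (a : α) :
    #{x : Fin k → α | x h = a} = Fintype.card α ^ (k - 1) := by
  simpa using Fintype.card_filter_piFinset_const_eq_of_mem (univ : Finset α) h (mem_univ a)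

def cubeCorner {k : ℕ} (v : List (Fin 4)) (ε : Fin k → Fin 2) : Fin k → Fin 4 :=
  fun j => v.getD j 0 + (ε j).castLE (by norm_num)

section CubeTiling

variable {k : ℕ} {K : Finset (List (Fin 4))}

lemma IsUSOSet.injOn_cubeCorner (hK : IsUSOSet k K) :
    Set.InjOn (fun p : List (Fin 4) × (Fin k → Fin 2) => cubeCorner p.1 p.2)
      ((K ×ˢ univ : Finset (List (Fin 4) × (Fin k → Fin 2))) : Set _) := by
  rintro ⟨v, ε⟩ hv ⟨w, δ⟩ hw heq
  simp only [coe_product, coe_univ, Set.mem_prod, mem_coe, Set.mem_univ, and_true] at hv hw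
  obtain rfl : v = w := by
    by_contra hvw
    obtain ⟨p, hp, hd⟩ := hK.2.2 v hv w hw hvw
    have hp := congrFun heq ⟨p, hp⟩
    simp only [cubeCorner, diff2At_iff.mp hd] at hp
    exact add_castLE_ne_add_two_add_castLE _ _ _ hp
  obtain rfl : ε = δ :=
    funext fun j => Fin.castLE_injective _ (add_left_cancel (congrFun heq j))
  rfl

lemma IsUSOSet.image_cubeCorner (hK : IsUSOSet k K) :
    (K ×ˢ univ).image (fun p : List (Fin 4) × (Fin k → Fin 2) => cubeCorner p.1 p.2) =
      univ := by
  apply eq_univ_of_card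
  rw [card_image_of_injOn hK.injOn_cubeCorner, card_product, hK.2.1, card_univ]
  simp [← mul_pow]

lemma IsUSOSet.card_filter_add_card_filter (hK : IsUSOSet k K) {h : ℕ} (hh : h < k)
    (t : Fin 4) : #{v ∈ K | v.getD h 0 = t} + #{v ∈ K | v.getD h 0 = t + 1} = 2 ^ (k - 1) := by
  let hf : Fin k := ⟨h, hh⟩
  let E (b : Fin 2) : Finset (Fin k → Fin 2) := {ε | ε hf = b}
  have hcount : #{p ∈ K ×ˢ univ | cubeCorner p.1 p.2 hf = t + 1} =
      2 ^ (k - 1) * 2 ^ (k - 1) :=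
    calc _ = #{x ∈ (K ×ˢ univ).image (fun p => cubeCorner p.1 p.2) | x hf = t + 1} := by
          rw [filter_image, card_image_of_injOn (hK.injOn_cubeCorner.mono (filter_subset _ _))]
      _ = 2 ^ (k - 1) * 2 ^ (k - 1) := by
          rw [hK.image_cubeCorner, card_filter_eval_eq, Fintype.card_fin, ← mul_pow]; rfl
  have hsplit : {p ∈ K ×ˢ (univ : Finset (Fin k → Fin 2)) | cubeCorner p.1 p.2 hf = t + 1} =
      {v ∈ K | v.getD h 0 = t + 1} ×ˢ E 0 ∪ {v ∈ K | v.getD h 0 = t} ×ˢ E 1 := by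
    refine Finset.ext fun ⟨v, ε⟩ => ?_
    simp only [cubeCorner, E, mem_filter, mem_product, mem_univ, and_true, mem_union,
      add_castLE_eq_add_one_iff, hf]
    tauto
  have hdisj :
      Disjoint ({v ∈ K | v.getD h 0 = t + 1} ×ˢ E 0) ({v ∈ K | v.getD h 0 = t} ×ˢ E 1) :=
    disjoint_product.mpr (Or.inr (disjoint_filter.mpr fun ε _ h0 h1 => by simp [h0] at h1))
  rw [hsplit, card_union_of_disjoint hdisj, card_product, card_product, card_filter_eval_eq,
    card_filter_eval_eq, Fintype.card_fin, ← add_mul, add_comm] at hcount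
  exact Nat.eq_of_mul_eq_mul_right (Nat.two_pow_pos _) hcount

end CubeTiling

section Rewrite

variable {k d i : ℕ} {S : Fin 4 → Fin i → Finset (List (Fin 4))} {K : Finset (List (Fin 4))}
  {h : ℕ} (L : List (Fin 4) → Fin i)

lemma IsGenRule.exists_diff2At_splice (hS : IsGenRule d i S) (hK : IsUSOSet k K) (hh : h < k)
    {v w s t : List (Fin 4)} (hv : v ∈ K) (hw : w ∈ K) (hs : s ∈ S (v.getD h 0) (L v))
    (ht : t ∈ S (w.getD h 0) (L w)) (hne : (v, s) ≠ (w, t)) :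
    ∃ q < k + d - 1, Diff2At (splice v h s) (splice w h t) q := by
  have hvk := hK.1 v hv
  have hwk := hK.1 w hw
  have hsd := hS.length_eq hs
  have htd := hS.length_eq ht
  have of_mem_uso (U) (hU : IsUSOSet d U) (hsU : s ∈ U) (htU : t ∈ U) (hst : s ≠ t) :
      ∃ q < k + d - 1, Diff2At (splice v h s) (splice w h t) q := by
    obtain ⟨q, hq, hd⟩ := hU.2.2 s hsU t htU hst
    exact ⟨h + q, by omega, hd.splice_add (by omega) (by omega) (by omega) (by omega)⟩
  by_cases hvw : v = w
  · subst hvw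
    exact of_mem_uso _ (hS.add_two _ (L v) (L v)).2 (mem_union_left _ hs) (mem_union_left _ ht)
      fun hst => hne (hst ▸ rfl)
  obtain ⟨p, hp, hd⟩ := hK.2.2 v hv w hw hvw
  rcases lt_trichotomy p h with hph | rfl | hph
  · exact ⟨p, by omega, hd.splice_of_lt hph (by omega) (by omega)⟩
  · rw [diff2At_iff.mp hd] at ht
    obtain ⟨hdisj, hU⟩ := hS.add_two _ (L v) (L w)
    exact of_mem_uso _ hU (mem_union_left _ hs) (mem_union_right _ ht)
      (disjoint_iff_ne.mp hdisj s hs t ht)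
  · exact ⟨p + s.length - 1, by omega,
      hd.splice_of_gt hph (by omega) (by omega) (hsd.trans htd.symm)⟩

lemma IsGenRule.eq_of_splice_eq (hS : IsGenRule d i S) (hK : IsUSOSet k K) (hh : h < k)
    {v w s t : List (Fin 4)} (hv : v ∈ K) (hw : w ∈ K) (hs : s ∈ S (v.getD h 0) (L v))
    (ht : t ∈ S (w.getD h 0) (L w)) (heq : splice v h s = splice w h t) : v = w ∧ s = t := by
  by_contra hne
  obtain ⟨q, -, hd⟩ :=
    hS.exists_diff2At_splice L hK hh hv hw hs ht fun hvs => hne (Prod.mk.inj hvs)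
  exact hd.ne heq

lemma IsGenRule.sum_card_eq (hS : IsGenRule d i S) (hK : IsUSOSet k K) (hh : h < k) :
    ∑ v ∈ K, #(S (v.getD h 0) (L v)) = 2 ^ (k + d - 1) := by
  -- `L []` is just some label: by `card_eq` any one serves as reference
  let a (c : Fin 4) : ℕ := #(S c (L []))
  let n (c : Fin 4) : ℕ := #{v ∈ K | v.getD h 0 = c}
  have hsum : ∑ v ∈ K, #(S (v.getD h 0) (L v)) = ∑ c, n c * a c := by
    rw [← sum_fiberwise K (fun v => v.getD h 0)]
    refine sum_congr rfl fun c _ => ?_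
    rw [sum_congr rfl fun v hv => by rw [(mem_filter.mp hv).2, hS.card_eq c (L v) (L [])],
      sum_const, smul_eq_mul]
  have ha0 : a 0 + a 2 = 2 ^ d := hS.card_add_card 0 _ _
  have ha1 : a 1 + a 3 = 2 ^ d := hS.card_add_card 1 _ _
  have hn0 : n 0 + n 1 = 2 ^ (k - 1) := hK.card_filter_add_card_filter hh 0
  have hn1 : n 1 + n 2 = 2 ^ (k - 1) := hK.card_filter_add_card_filter hh 1
  have hn2 : n 2 + n 3 = 2 ^ (k - 1) := hK.card_filter_add_card_filter hh 2
  rw [hsum, Fin.sum_univ_four, show n 2 = n 0 by omega, show n 3 = n 1 by omega,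
    show k + d - 1 = k - 1 + d by omega, pow_add, ← hn0]
  calc n 0 * a 0 + n 1 * a 1 + n 0 * a 2 + n 1 * a 3 = n 0 * (a 0 + a 2) + n 1 * (a 1 + a 3) := by
        ring
    _ = (n 0 + n 1) * 2 ^ d := by rw [ha0, ha1, add_mul]

end Rewrite

theorem stmt9 (k d i : ℕ) (S : Fin 4 → Fin i → Finset (List (Fin 4)))
    (hS : IsGenRule d i S) (K : Finset (List (Fin 4))) (hK : IsUSOSet k K)
    (L : List (Fin 4) → Fin i) (h : ℕ) (hh : h < k) :
    IsUSOSet (k + d - 1) (genRewrite S L h K) := by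
  refine ⟨?_, ?_, ?_⟩
  · simp only [genRewrite, mem_biUnion, mem_image]
    rintro _ ⟨v, hv, s, hs, rfl⟩
    rw [length_splice (by rw [hK.1 v hv]; exact hh), hK.1 v hv, hS.length_eq hs]
  · rw [genRewrite, card_biUnion, ← hS.sum_card_eq L hK hh]
    · exact sum_congr rfl fun v hv => card_image_of_injOn fun s hs t ht heq =>
        (hS.eq_of_splice_eq L hK hh hv hv hs ht heq).2
    · intro v hv w hw hvw
      refine disjoint_left.mpr fun x hx hx' => ?_
      obtain ⟨s, hs, rfl⟩ := mem_image.mp hx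
      obtain ⟨t, ht, heq⟩ := mem_image.mp hx'
      exact hvw (hS.eq_of_splice_eq L hK hh hw hv ht hs heq).1.symm
  · simp only [genRewrite, mem_biUnion, mem_image]
    rintro _ ⟨v, hv, s, hs, rfl⟩ _ ⟨w, hw, t, ht, rfl⟩ hne
    exact hS.exists_diff2At_splice L hK hh hv hw hs ht
      fun hvs => hne (congrArg (fun p => splice p.1 h p.2) hvs)
end
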